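/- arXiv:2207.13164 — 6 statements merged into one kernel-verified Lean document; each statement's English description precedes it below -/
import Mathlib

section
/- Let A be a C*-algebra, let N be a full Hilbert A-module with A-valued inner product ⟨·,·⟩, let M be a full closed A-submodule of N with M⊥ = {0} in N, and suppose r0 : N → A is a nonzero bounded A-linear functional vanishing on M. Define ⟨x,y⟩₂ := ⟨x,y⟩ + r0(x)* · r0(y) for x, y ∈ N. Then ⟨·,·⟩₂ is again an A-valued inner product on N (A-linear in the second variable, hermitian, positive, definite), its restriction to M coincides with the original inner product, and ⟨n,n⟩ ≤ ⟨n,n⟩₂ ≤ (1 + ‖r0‖²)·⟨n,n⟩ holds in A for every n ∈ N, so the two induced norms on N are equivalent. -/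
/-! The only nontrivial point is the upper bound `r0(x)* r0(x) ≤ ‖r0‖² ⟪x, x⟫`. For `ε > 0`
put `a = ⟪x, x⟫ + ε`. The vector `x a^(-1/2)` lies in the unit ball, so
`‖r0(x) a^(-1/2)‖ ≤ ‖r0‖`, i.e. `a^(-1/2) r0(x)* r0(x) a^(-1/2) ≤ ‖r0‖²`. Conjugating by `a^(1/2)`
gives `r0(x)* r0(x) ≤ ‖r0‖² (⟪x, x⟫ + ε)`, and `ε → 0` finishes. Everything else is algebra on
the definition of `⟪·,·⟫₂`. -/

open scoped RightActions

/-- The right Hilbert C⋆-module class of the older Mathlib (`CStarModule` with `[SMul Aᵐᵒᵖ E]`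
and `⟪x, y <• a⟫ = ⟪x, y⟫ * a`), restated here since Mathlib's `CStarModule` now uses left modules. -/
class CStarModuleRight (A : outParam <| Type*) (E : Type*) [NonUnitalSemiring A] [StarRing A]
    [Module ℂ A] [AddCommGroup E] [Module ℂ E] [PartialOrder A] [SMul Aᵐᵒᵖ E] [Norm A] [Norm E]
    extends Inner A E where
  inner_add_right {x} {y} {z} : inner x (y + z) = inner x y + inner x z
  inner_self_nonneg {x} : 0 ≤ inner x x
  inner_self {x} : inner x x = 0 ↔ x = 0
  inner_op_smul_right {a : A} {x y : E} : inner x (y <• a) = inner x y * a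
  inner_smul_right_complex {z : ℂ} {x} {y} : inner x (z • y) = z • inner x y
  star_inner x y : star (inner x y) = inner y x
  norm_eq_sqrt_norm_inner_self x : ‖x‖ = √‖inner x x‖

/-- The operator norm of a bounded `A`-linear functional `r0 : N → A`,
as the supremum of `‖r0 x‖` over the closed unit ball of `N`. -/
noncomputable def functionalOpNorm {A : Type*} [Norm A] {N : Type*} [Norm N]
    (r0 : N → A) : ℝ :=
  sSup ((fun x => ‖r0 x‖) '' {x : N | ‖x‖ ≤ 1})

open scoped InnerProductSpace

lemma ContinuousLinearMap.functionalOpNorm_eq_norm {𝕜 E F : Type*} [DenselyNormedField 𝕜]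
    [NormedAddCommGroup E] [NormedSpace 𝕜 E] [SeminormedAddCommGroup F] [NormedSpace 𝕜 F]
    (f : E →L[𝕜] F) : functionalOpNorm f = ‖f‖ := by
  rw [← f.sSup_unitClosedBall_eq_norm, functionalOpNorm]
  congr 2
  ext x
  simp

open Filter Topology in
theorem le_of_forall_pos_le_add_smul {E : Type*} [TopologicalSpace E] [AddCommGroup E]
    [Module ℝ E] [ContinuousAdd E] [ContinuousSMul ℝ E] [PartialOrder E] [OrderClosedTopology E]
    {a b z : E} (h : ∀ ε : ℝ, 0 < ε → a ≤ b + ε • z) : a ≤ b := by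
  have hcont : Continuous fun ε : ℝ => b + ε • z := by fun_prop
  have hlim : Tendsto (fun ε : ℝ => b + ε • z) (𝓝[>] 0) (𝓝 b) :=
    (hcont.tendsto' 0 b (by simp)).mono_left nhdsWithin_le_nhds
  exact ge_of_tendsto hlim (eventually_nhdsWithin_of_forall h)

theorem le_smul_of_forall_norm_conjugate_le {A : Type*} [CStarAlgebra A] [PartialOrder A]
    [StarOrderedRing A] {s K : A} {c : ℝ} (hs : IsSelfAdjoint s)
    (hK : 0 ≤ K) (hc : 0 ≤ c) (h : ∀ d : A, ‖star d * s * d‖ ≤ c * ‖star d * K * d‖) :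
    s ≤ c • K := by
  refine le_of_forall_pos_le_add_smul (z := c • (1 : A)) fun ε hε => ?_
  set a := K + ε • (1 : A)
  have ha : IsStrictlyPositive a := .nonneg_add hK (.smul hε isStrictlyPositive_one)
  set e : A := a ^ (1 / 2 : ℝ)
  set d : A := a ^ (-(1 / 2) : ℝ)
  have he : 0 ≤ e := CFC.rpow_nonneg
  have hd : 0 ≤ d := CFC.rpow_nonneg
  have hde : d * e = 1 := CFC.rpow_neg_mul_rpow _ ha
  have hed : e * d = 1 := CFC.rpow_mul_rpow_neg _ ha
  have hee : e * e = a := by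
    rw [← CFC.rpow_add ha.isUnit, add_halves, CFC.rpow_one a ha.nonneg]
  have hdKd : ‖d * K * d‖ ≤ 1 := by
    rw [CStarAlgebra.norm_le_one_iff_of_nonneg _ (conjugate_nonneg_of_nonneg hK hd)]
    have hKa : K ≤ a := le_add_of_nonneg_right (smul_nonneg hε.le zero_le_one)
    calc d * K * d ≤ d * a * d := conjugate_le_conjugate_of_nonneg hKa hd
      _ = (d * e) * (e * d) := by rw [← hee]; noncomm_ring
      _ = 1 := by rw [hde, hed, one_mul]
  have hd_star : star d = d := hd.isSelfAdjoint.star_eq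
  have hdsd : d * s * d ≤ c • (1 : A) := by
    have hnorm : ‖d * s * d‖ ≤ c := by
      have := h d
      rw [hd_star] at this
      nlinarith [norm_nonneg (d * K * d)]
    have hsa : IsSelfAdjoint (d * s * d) := by simpa only [hd_star] using hs.conjugate d
    calc d * s * d ≤ algebraMap ℝ A ‖d * s * d‖ := hsa.le_algebraMap_norm_self
      _ ≤ c • (1 : A) := by
        rw [Algebra.algebraMap_eq_smul_one]
        exact smul_le_smul_of_nonneg_right hnorm zero_le_one
  calc s = e * (d * s * d) * e := by
        rw [show e * (d * s * d) * e = (e * d) * s * (d * e) by noncomm_ring, hed, hde,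
          one_mul, mul_one]
    _ ≤ e * (c • (1 : A)) * e := conjugate_le_conjugate_of_nonneg hdsd he
    _ = c • K + ε • c • (1 : A) := by
        rw [mul_smul_comm, mul_one, smul_mul_assoc, hee, smul_add, smul_comm c ε]

namespace CStarModuleRight

section Algebraic

variable {A : Type*} [NonUnitalRing A] [StarRing A] [Module ℂ A] [PartialOrder A] [Norm A]
  {E : Type*} [AddCommGroup E] [Module ℂ E] [SMul Aᵐᵒᵖ E] [Norm E] [CStarModuleRight A E]

lemma inner_sub_right (x y z : E) : ⟪x, y - z⟫_A = ⟪x, y⟫_A - ⟪x, z⟫_A :=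
  eq_sub_of_add_eq (by rw [← inner_add_right, sub_add_cancel])

lemma inner_op_smul_left (a : A) (x y : E) : ⟪x <• a, y⟫_A = star a * ⟪x, y⟫_A := by
  rw [← star_inner y, inner_op_smul_right, star_mul, star_inner]

lemma ext_inner_right {u v : E} (h : ∀ w : E, ⟪w, u⟫_A = ⟪w, v⟫_A) : u = v := by
  rw [← sub_eq_zero, ← inner_self (A := A), inner_sub_right, h, sub_self]

end Algebraic

section Normed

variable {A : Type*} [NonUnitalNormedRing A] [StarRing A] [Module ℂ A] [PartialOrder A]
  {E : Type*} [AddCommGroup E] [Module ℂ E] [SMul Aᵐᵒᵖ E] [Norm E] [CStarModuleRight A E]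

lemma sq_norm (x : E) : ‖x‖ ^ 2 = ‖⟪x, x⟫_A‖ := by
  rw [norm_eq_sqrt_norm_inner_self (A := A) x, Real.sq_sqrt (norm_nonneg _)]

lemma sq_norm_op_smul (x : E) (a : A) : ‖x <• a‖ ^ 2 = ‖star a * ⟪x, x⟫_A * a‖ := by
  rw [sq_norm (A := A), inner_op_smul_right, inner_op_smul_left]

end Normed

section Unital

variable {A : Type*} [Ring A] [Algebra ℂ A] [StarRing A] [PartialOrder A] [Norm A]
  {E : Type*} [AddCommGroup E] [Module ℂ E] [SMul Aᵐᵒᵖ E] [Norm E] [CStarModuleRight A E]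

lemma op_smul_algebraMap (z : ℂ) (y : E) : y <• algebraMap ℂ A z = z • y :=
  ext_inner_right (A := A) fun w => by
    rw [inner_op_smul_right, inner_smul_right_complex, Algebra.algebraMap_eq_smul_one,
      mul_smul_comm, mul_one]

lemma apply_smul_of_apply_op_smul {r : E → A} (hr : ∀ (x : E) (a : A), r (x <• a) = r x * a)
    (z : ℂ) (y : E) : r (z • y) = z • r y := by
  rw [← op_smul_algebraMap (A := A), hr, Algebra.algebraMap_eq_smul_one,
    mul_smul_comm, mul_one]

end Unital

section BoundedModuleMap

variable {A : Type*} [CStarAlgebra A] [PartialOrder A]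
  {E : Type*} [NormedAddCommGroup E] [NormedSpace ℂ E] [SMul Aᵐᵒᵖ E] [CStarModuleRight A E]

def continuousLinearMapOfOpSMul (r : E → A) (hadd : ∀ x y : E, r (x + y) = r x + r y)
    (hmod : ∀ (x : E) (a : A), r (x <• a) = r x * a) (hcont : Continuous r) : E →L[ℂ] A where
  toFun := r
  map_add' := hadd
  map_smul' := apply_smul_of_apply_op_smul hmod
  cont := hcont

theorem star_apply_mul_apply_le [StarOrderedRing A] (f : E →L[ℂ] A)
    (hf : ∀ (x : E) (a : A), f (x <• a) = f x * a) (x : E) :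
    star (f x) * f x ≤ ‖f‖ ^ 2 • ⟪x, x⟫_A := by
  refine le_smul_of_forall_norm_conjugate_le (.star_mul_self _)
    inner_self_nonneg (sq_nonneg _) fun d => ?_
  calc ‖star d * (star (f x) * f x) * d‖ = ‖f (x <• d)‖ ^ 2 := by
        rw [hf, sq, ← CStarRing.norm_star_mul_self, star_mul]; noncomm_ring
    _ ≤ (‖f‖ * ‖x <• d‖) ^ 2 := by gcongr; exact f.le_opNorm _
    _ = ‖f‖ ^ 2 * ‖star d * ⟪x, x⟫_A * d‖ := by
        rw [mul_pow, sq_norm_op_smul]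

end BoundedModuleMap

end CStarModuleRight

theorem perturbed_inner_product_is_inner_product_general
    {A : Type*} [CStarAlgebra A] [PartialOrder A] [StarOrderedRing A]
    {N : Type*} [NormedAddCommGroup N] [NormedSpace ℂ N] [SMul Aᵐᵒᵖ N] [CStarModuleRight A N]
    -- `M` is a closed `A`-submodule of `N`
    (M : Submodule ℂ N)
    -- `r0` is a nonzero bounded `A`-linear functional on `N` vanishing on `M`
    (r0 : N → A) (hr0cont : Continuous r0)
    (hr0add : ∀ x y : N, r0 (x + y) = r0 x + r0 y)
    (hr0mod : ∀ (x : N) (a : A), r0 (x <• a) = r0 x * a)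
    (hr0M : ∀ m ∈ M, r0 m = 0)
    -- the perturbed inner product
    (inner₂ : N → N → A) (hinner₂ : ∀ x y : N,
      inner₂ x y = inner (𝕜 := A) x y + star (r0 x) * r0 y) :
    -- additive and `A`-linear in the second variable
    (∀ x y z : N, inner₂ x (y + z) = inner₂ x y + inner₂ x z) ∧
    (∀ (x y : N) (a : A), inner₂ x (y <• a) = inner₂ x y * a) ∧
    (∀ (x y : N) (z : ℂ), inner₂ x (z • y) = z • inner₂ x y) ∧
    -- hermitian
    (∀ x y : N, star (inner₂ x y) = inner₂ y x) ∧
    -- positive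
    (∀ x : N, 0 ≤ inner₂ x x) ∧
    -- definite
    (∀ x : N, inner₂ x x = 0 ↔ x = 0) ∧
    -- restriction to `M` coincides with the original inner product
    (∀ x ∈ M, ∀ y ∈ M, inner₂ x y = inner (𝕜 := A) x y) ∧
    -- the two-sided norm estimate giving equivalence of the induced norms
    (∀ n : N, inner (𝕜 := A) n n ≤ inner₂ n n ∧
      inner₂ n n ≤ (1 + functionalOpNorm r0 ^ 2) • inner (𝕜 := A) n n) := by
  set f := CStarModuleRight.continuousLinearMapOfOpSMul r0 hr0add hr0mod hr0cont
  have hr0zero : r0 0 = 0 := f.map_zero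
  have hbound (n : N) : star (r0 n) * r0 n ≤ functionalOpNorm r0 ^ 2 • ⟪n, n⟫_A :=
    f.functionalOpNorm_eq_norm.symm ▸ CStarModuleRight.star_apply_mul_apply_le f hr0mod n
  have hlower (n : N) : ⟪n, n⟫_A ≤ inner₂ n n :=
    hinner₂ n n ▸ le_add_of_nonneg_right (star_mul_self_nonneg _)
  refine ⟨fun x y z => ?_, fun x y a => ?_, fun x y z => ?_, fun x y => ?_,
    fun x => ?_, fun x => ⟨fun h => ?_, fun h => ?_⟩, fun x hx y _ => ?_,
    fun n => ⟨hlower n, ?_⟩⟩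
  · simp only [hinner₂, CStarModuleRight.inner_add_right, hr0add, mul_add]
    abel
  · simp only [hinner₂, CStarModuleRight.inner_op_smul_right, hr0mod, add_mul, mul_assoc]
  · simp only [hinner₂, CStarModuleRight.inner_smul_right_complex,
      CStarModuleRight.apply_smul_of_apply_op_smul hr0mod, mul_smul_comm, smul_add]
  · simp only [hinner₂, star_add, star_mul, star_star, CStarModuleRight.star_inner]
  · exact CStarModuleRight.inner_self_nonneg.trans (hlower x)
  · exact CStarModuleRight.inner_self.mp
      (le_antisymm (h ▸ hlower x) CStarModuleRight.inner_self_nonneg)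
  · rw [hinner₂, h, CStarModuleRight.inner_self.mpr rfl, hr0zero, mul_zero, add_zero]
  · rw [hinner₂, hr0M x hx, star_zero, zero_mul, add_zero]
  · rw [hinner₂, add_smul, one_smul]
    exact add_le_add_right (hbound n) _

/-- Let `A` be a C*-algebra, `N` a full Hilbert `A`-module, `M` a full closed
`A`-submodule with `M⊥ = {0}` in `N`, and `r0 : N → A` a nonzero bounded `A`-linear
functional vanishing on `M`.  Then `⟪x,y⟫₂ := ⟪x,y⟫ + r0(x)* ⬝ r0(y)` is again an
`A`-valued inner product on `N`, restricting to the original one on `M`, and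
`⟪n,n⟫ ≤ ⟪n,n⟫₂ ≤ (1 + ‖r0‖²) • ⟪n,n⟫` for all `n ∈ N`, so the induced norms are
equivalent. -/
theorem perturbed_inner_product_is_inner_product
    {A : Type*} [CStarAlgebra A] [PartialOrder A] [StarOrderedRing A]
    {N : Type*} [NormedAddCommGroup N] [NormedSpace ℂ N] [SMul Aᵐᵒᵖ N] [CStarModuleRight A N]
    [CompleteSpace N]
    -- `N` is full
    (hNfull : (Submodule.span ℂ
      {a : A | ∃ x y : N, a = inner (𝕜 := A) x y}).topologicalClosure = ⊤)
    -- `M` is a closed `A`-submodule of `N`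
    (M : Submodule ℂ N) (hMclosed : IsClosed (M : Set N))
    (hMsmul : ∀ (a : A), ∀ m ∈ M, m <• a ∈ M)
    -- `M` is full
    (hMfull : (Submodule.span ℂ
      {a : A | ∃ x ∈ M, ∃ y ∈ M, a = inner (𝕜 := A) x y}).topologicalClosure = ⊤)
    -- `M⊥ = {0}` in `N`
    (hMbot : ∀ n : N, (∀ m ∈ M, inner (𝕜 := A) m n = 0) → n = 0)
    -- `r0` is a nonzero bounded `A`-linear functional on `N` vanishing on `M`
    (r0 : N → A) (hr0cont : Continuous r0)
    (hr0add : ∀ x y : N, r0 (x + y) = r0 x + r0 y)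
    (hr0mod : ∀ (x : N) (a : A), r0 (x <• a) = r0 x * a)
    (hr0ne : ∃ x : N, r0 x ≠ 0)
    (hr0M : ∀ m ∈ M, r0 m = 0)
    -- the perturbed inner product
    (inner₂ : N → N → A) (hinner₂ : ∀ x y : N,
      inner₂ x y = inner (𝕜 := A) x y + star (r0 x) * r0 y) :
    -- additive and `A`-linear in the second variable
    (∀ x y z : N, inner₂ x (y + z) = inner₂ x y + inner₂ x z) ∧
    (∀ (x y : N) (a : A), inner₂ x (y <• a) = inner₂ x y * a) ∧
    (∀ (x y : N) (z : ℂ), inner₂ x (z • y) = z • inner₂ x y) ∧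
    -- hermitian
    (∀ x y : N, star (inner₂ x y) = inner₂ y x) ∧
    -- positive
    (∀ x : N, 0 ≤ inner₂ x x) ∧
    -- definite
    (∀ x : N, inner₂ x x = 0 ↔ x = 0) ∧
    -- restriction to `M` coincides with the original inner product
    (∀ x ∈ M, ∀ y ∈ M, inner₂ x y = inner (𝕜 := A) x y) ∧
    -- the two-sided norm estimate giving equivalence of the induced norms
    (∀ n : N, inner (𝕜 := A) n n ≤ inner₂ n n ∧
      inner₂ n n ≤ (1 + functionalOpNorm r0 ^ 2) • inner (𝕜 := A) n n) :=
  perturbed_inner_product_is_inner_product_general M r0 hr0cont hr0add hr0mod hr0M inner₂ hinner₂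
end

section
/- Let A be a von Neumann algebra, let N be a Hilbert A-module and let M be a closed A-submodule of N with M⊥ = {0} in N. Then the annihilators in A of the inner-product ideals of M and of N coincide: {a ∈ A : a·⟨x,y⟩ = 0 for all x, y ∈ M} = {a ∈ A : a·⟨x,y⟩ = 0 for all x, y ∈ N}; moreover there exists a projection p in the center of A such that this common annihilator equals (1 − p)·A. -/
open scoped RightActions

universe u

/-- A C⋆-algebra is a von Neumann algebra if it is ⋆-isomorphic to a concrete
von Neumann algebra (in the sense of Mathlib's `VonNeumannAlgebra`) acting on
some complex Hilbert space. -/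
def IsVonNeumannAlgebra (A : Type u) [CStarAlgebra A] : Prop :=
  ∃ (H : Type u) (_ : NormedAddCommGroup H) (_ : InnerProductSpace ℂ H) (_ : CompleteSpace H)
    (W : VonNeumannAlgebra H), Nonempty (A ≃⋆ₐ[ℂ] W.toStarSubalgebra)

/-- The December 2024 Mathlib notion of a Hilbert C⋆-module (right module, via `Aᵐᵒᵖ`),
reproduced verbatim under a new name since Mathlib's `CStarModule` is now a left module. -/
class RightCStarModule (A E : Type*) [NonUnitalSemiring A] [StarRing A]
    [Module ℂ A] [AddCommGroup E] [Module ℂ E] [PartialOrder A] [SMul Aᵐᵒᵖ E] [Norm A] [Norm E]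
    extends Inner A E where
  inner_add_right {x} {y} {z} : inner x (y + z) = inner x y + inner x z
  inner_self_nonneg {x} : 0 ≤ inner x x
  inner_self {x} : inner x x = 0 ↔ x = 0
  inner_op_smul_right {a : A} {x y : E} : inner x (y <• a) = inner x y * a
  inner_smul_right_complex {z : ℂ} {x} {y} : inner x (z • y) = z • inner x y
  star_inner x y : star (inner x y) = inner y x
  norm_eq_sqrt_norm_inner_self x : ‖x‖ = √‖inner x x‖

/-!
The inner products of `M` form a self-adjoint set `S` closed under right multiplication. Realise
`A` as a concrete von Neumann algebra `W`; the range of the projection `q` onto `⋂ s ∈ S, ker s`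
is invariant under `W` and under `W'`, so `q` lies in the center of `W`, and `a S = 0` iff
`a q = a`. As `⟨M, M⟩ q = 0` and `M⊥ = 0`, the module action of `q` kills `M` and then all of
`N`, so `q ⟨N, N⟩ = 0`. Both annihilators are therefore `q A`, and `p = 1 - q`.
-/

namespace VonNeumannAlgebra

open ContinuousLinearMap

variable {H : Type*} [NormedAddCommGroup H] [InnerProductSpace ℂ H] [CompleteSpace H]

theorem exists_central_starProjection_annihilator (W : VonNeumannAlgebra H)
    (S : Set (H →L[ℂ] H)) (hSW : S ⊆ W) (hstar : ∀ s ∈ S, star s ∈ S)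
    (hmul : ∀ s ∈ S, ∀ w ∈ W, s * w ∈ S) :
    ∃ q ∈ W, q ∈ W.commutant ∧ IsStarProjection q ∧
      ∀ a : H →L[ℂ] H, (∀ s ∈ S, a * s = 0) ↔ a * q = a := by
  set K : Submodule ℂ H := ⨅ s ∈ S, s.ker
  have hK : ∀ ξ, ξ ∈ K ↔ ∀ s ∈ S, s ξ = 0 := by simp [K]
  have hKclosed : IsClosed (K : Set H) := by
    simpa [K] using isClosed_biInter fun s (_ : s ∈ S) ↦ s.isClosed_ker
  have := hKclosed.completeSpace_coe
  set q := K.starProjection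
  have hq : IsStarProjection q := isStarProjection_starProjection
  have hrange : q.range = K := K.range_starProjection
  have hqW : q ∈ W := by
    refine (IsStarProjection.mem_iff hq W).2 fun y hy ↦ ?_
    rw [hrange, Module.End.mem_invtSubmodule_iff_forall_mem_of_mem]
    intro ξ hξ
    rw [hK] at hξ ⊢
    intro s hs
    change (s * y) ξ = 0
    rw [mem_commutant_iff.1 hy s (hSW hs), mul_apply_eq_comp, hξ s hs, map_zero]
  have hqW' : q ∈ W.commutant := by
    refine (IsStarProjection.mem_iff hq _).2 fun w hw ↦ ?_
    rw [commutant_commutant] at hw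
    rw [hrange, Module.End.mem_invtSubmodule_iff_forall_mem_of_mem]
    intro ξ hξ
    rw [hK] at hξ ⊢
    intro s hs
    exact hξ _ (hmul s hs w hw)
  refine ⟨q, hqW, hqW', hq, fun a ↦ ⟨fun ha ↦ ?_, fun ha s hs ↦ ?_⟩⟩
  · have : q * star a = star a := by
      ext ξ
      refine K.starProjection_eq_self_iff.2 ((hK _).2 fun s hs ↦ ?_)
      simpa [← mul_apply] using congr(star $(ha _ (hstar s hs)) ξ)
    simpa [hq.isSelfAdjoint.star_eq] using congr(star $this)
  · have hsq : s * q = 0 := by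
      ext ξ
      exact (hK _).1 (K.starProjection_apply_mem ξ) s hs
    rw [← ha, mul_assoc, ← mem_commutant_iff.1 hqW' s (hSW hs), hsq, mul_zero]

end VonNeumannAlgebra

namespace IsVonNeumannAlgebra

variable {A : Type u} [CStarAlgebra A]

theorem exists_central_starProjection_annihilator (hA : IsVonNeumannAlgebra A) (S : Set A)
    (hstar : ∀ s ∈ S, star s ∈ S) (hmul : ∀ s ∈ S, ∀ b, s * b ∈ S) :
    ∃ z : A, IsStarProjection z ∧ z ∈ Set.center A ∧
      ∀ a : A, (∀ s ∈ S, a * s = 0) ↔ a * z = a := by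
  obtain ⟨H, _, _, _, W, ⟨φ⟩⟩ := hA
  let T : A →⋆ₐ[ℂ] (H →L[ℂ] H) := W.toStarSubalgebra.subtype.comp φ.toStarAlgHom
  have hT : Function.Injective T := Subtype.val_injective.comp φ.injective
  have hTW : ∀ a, T a ∈ W := fun a ↦ (φ a).2
  have hTsurj : ∀ w ∈ W, ∃ a, T a = w := fun w hw ↦
    ⟨φ.symm ⟨w, hw⟩, congrArg Subtype.val (φ.apply_symm_apply ⟨w, hw⟩)⟩
  obtain ⟨q, hqW, hqW', hq, hann⟩ := W.exists_central_starProjection_annihilator (T '' S)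
    (by rintro _ ⟨s, -, rfl⟩; exact hTW s)
    (by rintro _ ⟨s, hs, rfl⟩; exact ⟨star s, hstar s hs, map_star T s⟩)
    (by
      rintro _ ⟨s, hs, rfl⟩ w hw
      obtain ⟨b, rfl⟩ := hTsurj w hw
      exact ⟨s * b, hmul s hs b, map_mul T s b⟩)
  obtain ⟨z, rfl⟩ := hTsurj q hqW
  refine ⟨z, ⟨hT ?_, hT ?_⟩, Semigroup.mem_center_iff.2 fun b ↦ hT ?_, fun a ↦ ?_⟩
  · rw [map_mul, hq.isIdempotentElem.eq]
  · rw [map_star, hq.isSelfAdjoint.star_eq]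
  · rw [map_mul, map_mul, VonNeumannAlgebra.mem_commutant_iff.1 hqW' _ (hTW b)]
  · rw [← hT.eq_iff, map_mul, ← hann, Set.forall_mem_image]
    simp only [← map_mul, ← map_zero T, hT.eq_iff]

end IsVonNeumannAlgebra

namespace RightCStarModule

variable {A E : Type*} [NonUnitalSemiring A] [StarRing A] [Module ℂ A] [AddCommGroup E]
  [Module ℂ E] [PartialOrder A] [SMul Aᵐᵒᵖ E] [Norm A] [Norm E] [RightCStarModule A E]

@[simp]
theorem inner_zero_right (x : E) : inner (𝕜 := A) x (0 : E) = 0 := by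
  simpa using inner_smul_right_complex (A := A) (z := 0) (x := x) (y := (0 : E))

theorem mul_inner_eq_zero_of_inner_mul_eq_zero {M : Set E}
    (hMbot : ∀ n : E, (∀ m ∈ M, inner (𝕜 := A) m n = 0) → n = 0) {z : A}
    (hz : IsSelfAdjoint z) (hzc : z ∈ Set.center A)
    (hMz : ∀ x ∈ M, ∀ y ∈ M, inner (𝕜 := A) x y * z = 0) (x y : E) :
    z * inner (𝕜 := A) x y = 0 := by
  have hM : ∀ m ∈ M, m <• z = 0 := fun m hm ↦
    hMbot _ fun m' hm' ↦ by rw [inner_op_smul_right, hMz m' hm' m hm]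
  have hE : ∀ n : E, n <• z = 0 := fun n ↦ hMbot _ fun m hm ↦ by
    rw [inner_op_smul_right, Semigroup.mem_center_iff.1 hzc, ← hz.star_eq, ← star_inner n m,
      ← star_mul, ← inner_op_smul_right, hM m hm, inner_zero_right, star_zero]
  rw [← Semigroup.mem_center_iff.1 hzc, ← inner_op_smul_right, hE, inner_zero_right]

end RightCStarModule

theorem IsIdempotentElem.mul_eq_self_iff_exists_eq_mul {R : Type*} [Semigroup R] {z : R}
    (hz : IsIdempotentElem z) (hzc : z ∈ Set.center R) (a : R) : a * z = a ↔ ∃ b, a = z * b := by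
  refine ⟨fun h ↦ ⟨a, by rw [← Semigroup.mem_center_iff.1 hzc, h]⟩, ?_⟩
  rintro ⟨b, rfl⟩
  rw [mul_assoc, Semigroup.mem_center_iff.1 hzc, ← mul_assoc, hz.eq]

theorem annihilators_of_inner_ideals_coincide_general
    {A : Type u} [CStarAlgebra A] [PartialOrder A]
    (hA : IsVonNeumannAlgebra A)
    {N : Type*} [NormedAddCommGroup N] [NormedSpace ℂ N] [SMul Aᵐᵒᵖ N] [RightCStarModule A N]
    -- `M` is a closed `A`-submodule of `N`
    (M : Submodule ℂ N)
    (hMsmul : ∀ (a : A), ∀ m ∈ M, m <• a ∈ M)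
    -- `M⊥ = {0}` in `N`
    (hMbot : ∀ n : N, (∀ m ∈ M, inner (𝕜 := A) m n = 0) → n = 0) :
    {a : A | ∀ x ∈ M, ∀ y ∈ M, a * inner (𝕜 := A) x y = 0}
      = {a : A | ∀ x y : N, a * inner (𝕜 := A) x y = 0} ∧
    ∃ p : A, IsSelfAdjoint p ∧ IsIdempotentElem p ∧ p ∈ Set.center A ∧
      {a : A | ∀ x y : N, a * inner (𝕜 := A) x y = 0} = {b : A | ∃ a : A, b = (1 - p) * a} := by
  obtain ⟨z, hz, hzc, hann⟩ := hA.exists_central_starProjection_annihilator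
    (Set.image2 (inner A) (M : Set N) M)
    (by
      rintro _ ⟨x, hx, y, hy, rfl⟩
      exact ⟨y, hy, x, hx, (RightCStarModule.star_inner x y).symm⟩)
    (by
      rintro _ ⟨x, hx, y, hy, rfl⟩ b
      exact ⟨x, hx, y <• b, hMsmul b y hy, RightCStarModule.inner_op_smul_right⟩)
  simp only [Set.forall_mem_image2] at hann
  have hzN := RightCStarModule.mul_inner_eq_zero_of_inner_mul_eq_zero (M := (M : Set N)) hMbot
    hz.isSelfAdjoint hzc fun x hx y hy ↦ by
      rw [Semigroup.mem_center_iff.1 hzc]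
      exact (hann z).2 hz.isIdempotentElem x hx y hy
  have hannN : {a : A | ∀ x y : N, a * inner (𝕜 := A) x y = 0} = {a | a * z = a} := by
    ext a
    refine ⟨fun ha ↦ (hann a).1 fun x _ y _ ↦ ha x y, fun ha x y ↦ ?_⟩
    rw [← ha, mul_assoc, hzN, mul_zero]
  refine ⟨?_, 1 - z, hz.one_sub.isSelfAdjoint, hz.one_sub.isIdempotentElem,
    (Subring.center A).sub_mem (Subring.center A).one_mem hzc, ?_⟩
  · rw [hannN]
    exact Set.ext hann
  · rw [hannN, sub_sub_cancel]
    exact Set.ext (hz.isIdempotentElem.mul_eq_self_iff_exists_eq_mul hzc)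

/-- Let `A` be a von Neumann algebra, `N` a Hilbert `A`-module and `M` a closed
`A`-submodule with `M⊥ = {0}` in `N`.  Then the annihilators in `A` of the
inner-product ideals of `M` and of `N` coincide, and there is a projection `p` in the
center of `A` such that this common annihilator equals `(1 - p)·A`. -/
theorem annihilators_of_inner_ideals_coincide
    {A : Type u} [CStarAlgebra A] [PartialOrder A] [StarOrderedRing A]
    (hA : IsVonNeumannAlgebra A)
    {N : Type*} [NormedAddCommGroup N] [NormedSpace ℂ N] [SMul Aᵐᵒᵖ N] [RightCStarModule A N]
    [CompleteSpace N]
    -- `M` is a closed `A`-submodule of `N`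
    (M : Submodule ℂ N) (hMclosed : IsClosed (M : Set N))
    (hMsmul : ∀ (a : A), ∀ m ∈ M, m <• a ∈ M)
    -- `M⊥ = {0}` in `N`
    (hMbot : ∀ n : N, (∀ m ∈ M, inner (𝕜 := A) m n = 0) → n = 0) :
    {a : A | ∀ x ∈ M, ∀ y ∈ M, a * inner (𝕜 := A) x y = 0}
      = {a : A | ∀ x y : N, a * inner (𝕜 := A) x y = 0} ∧
    ∃ p : A, IsSelfAdjoint p ∧ IsIdempotentElem p ∧ p ∈ Set.center A ∧
      {a : A | ∀ x y : N, a * inner (𝕜 := A) x y = 0} = {b : A | ∃ a : A, b = (1 - p) * a} :=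
  annihilators_of_inner_ideals_coincide_general hA M hMsmul hMbot
end

section
/- Let A be a von Neumann algebra, let N be a Hilbert A-module and let M be a closed A-submodule of N with M⊥ = {0} in N. For any finite families x₁,…,x_k and y₁,…,y_k of elements of M and complex numbers λ₁,…,λ_k, the operator T(z) := Σᵢ λᵢ · yᵢ·⟨xᵢ, z⟩ has the same operator norm on M as on N, i.e. sup{‖T(z)‖ : z ∈ M, ‖z‖ ≤ 1} = sup{‖T(z)‖ : z ∈ N, ‖z‖ ≤ 1}. In particular ‖θ_{x,y}‖ computed on M equals ‖θ_{x,y}‖ computed on N for every x, y ∈ M, where θ_{x,y}(z) = y·⟨x,z⟩. -/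
open scoped RightActions

universe u

/-! Let `T = ∑ λᵢ θ_{xᵢ,yᵢ}` and `S = ∑ λ̄ᵢ θ_{yᵢ,xᵢ}`, so that `⟪w, T z⟫ = ⟪S w, z⟫`, and both
take values in `M`. For `z ∈ N`, Cauchy–Schwarz gives
`‖T z‖² = ‖⟪S (T z), z⟫‖ ≤ ‖S|_M‖ ‖T z‖ ‖z‖`, hence `‖T‖ ≤ ‖S|_M‖`; the same computation with the
roles of `T` and `S` exchanged, now for `z ∈ M`, gives `‖S|_M‖ ≤ ‖T|_M‖ ≤ ‖T‖`. -/

namespace RightCStarModule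

open scoped InnerProductSpace

variable {A : Type*} [CStarAlgebra A] [PartialOrder A]
  {N : Type*} [NormedAddCommGroup N] [NormedSpace ℂ N] [SMul Aᵐᵒᵖ N] [RightCStarModule A N]

variable (A) in
def innerₗ (x : N) : N →ₗ[ℂ] A where
  toFun := inner A x
  map_add' _ _ := inner_add_right
  map_smul' _ _ := inner_smul_right_complex

lemma inner_sub_right (x y z : N) : ⟪x, y - z⟫_A = ⟪x, y⟫_A - ⟪x, z⟫_A :=
  map_sub (innerₗ A x) y z

lemma inner_sum_right {ι : Type*} (s : Finset ι) (x : N) (y : ι → N) :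
    ⟪x, ∑ i ∈ s, y i⟫_A = ∑ i ∈ s, ⟪x, y i⟫_A :=
  map_sum (innerₗ A x) y s

lemma inner_sum_left {ι : Type*} (s : Finset ι) (x : ι → N) (y : N) :
    ⟪∑ i ∈ s, x i, y⟫_A = ∑ i ∈ s, ⟪x i, y⟫_A := by
  simp only [← star_inner y, inner_sum_right, star_sum]

lemma inner_sub_left (x y z : N) : ⟪x - y, z⟫_A = ⟪x, z⟫_A - ⟪y, z⟫_A := by
  simp only [← star_inner z, inner_sub_right, star_sub]

@[simp] lemma inner_zero_left (x : N) : ⟪0, x⟫_A = 0 := by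
  simpa using inner_sub_left (A := A) 0 0 x

lemma inner_op_smul_left (a : A) (x y : N) : ⟪x <• a, y⟫_A = star a * ⟪x, y⟫_A := by
  rw [← star_inner y, inner_op_smul_right, star_mul, star_inner]

lemma inner_smul_left_complex (c : ℂ) (x y : N) : ⟪c • x, y⟫_A = star c • ⟪x, y⟫_A := by
  rw [← star_inner y, inner_smul_right_complex, star_smul, star_inner]

lemma inner_smul_right_real (r : ℝ) (x y : N) : ⟪x, r • y⟫_A = r • ⟪x, y⟫_A := by
  rw [← Complex.coe_smul, inner_smul_right_complex, Complex.coe_smul]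

lemma inner_smul_left_real (r : ℝ) (x y : N) : ⟪r • x, y⟫_A = r • ⟪x, y⟫_A := by
  rw [← Complex.coe_smul, inner_smul_left_complex, Complex.star_def, Complex.conj_ofReal,
    Complex.coe_smul]

variable (A) in
lemma ext_inner_left {x y : N} (h : ∀ w, ⟪w, x⟫_A = ⟪w, y⟫_A) : x = y := by
  rw [← sub_eq_zero, ← inner_self (A := A), inner_sub_right, h, sub_self]

variable (A) in
lemma norm_sq_eq_norm_inner_self (x : N) : ‖x‖ ^ 2 = ‖⟪x, x⟫_A‖ := by
  rw [norm_eq_sqrt_norm_inner_self (A := A) x, Real.sq_sqrt (norm_nonneg _)]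

variable (A) in
def opSMulₗ (y : N) : A →ₗ[ℂ] N where
  toFun a := y <• a
  map_add' a b := ext_inner_left A fun w => by
    simp only [inner_op_smul_right, inner_add_right, mul_add]
  map_smul' c a := ext_inner_left A fun w => by
    simp only [inner_op_smul_right, inner_smul_right_complex, mul_smul_comm, RingHom.id_apply]

lemma norm_op_smul_le (y : N) (a : A) : ‖y <• a‖ ≤ ‖y‖ * ‖a‖ := by
  refine (pow_le_pow_iff_left₀ (norm_nonneg _) (by positivity) two_ne_zero).mp ?_
  calc ‖y <• a‖ ^ 2 = ‖star a * (⟪y, y⟫_A * a)‖ := by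
        rw [norm_sq_eq_norm_inner_self A, inner_op_smul_left, inner_op_smul_right]
    _ ≤ ‖a‖ * (‖⟪y, y⟫_A‖ * ‖a‖) := by
        grw [norm_mul_le, norm_mul_le, norm_star]
    _ = (‖y‖ * ‖a‖) ^ 2 := by rw [← norm_sq_eq_norm_inner_self]; ring

variable [StarOrderedRing A]

lemma inner_mul_inner_swap_le (x y : N) : ⟪y, x⟫_A * ⟪x, y⟫_A ≤ ‖x‖ ^ 2 • ⟪y, y⟫_A := by
  rcases eq_or_ne x 0 with rfl | hx
  · simp
  have ht : 0 < ‖x‖ ^ 2 := by positivity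
  rw [← star_inner x y]
  have hexpand : ⟪x <• ⟪x, y⟫_A - ‖x‖ ^ 2 • y, x <• ⟪x, y⟫_A - ‖x‖ ^ 2 • y⟫_A
      = (star ⟪x, y⟫_A * ⟪x, x⟫_A * ⟪x, y⟫_A - ‖x‖ ^ 2 • (star ⟪x, y⟫_A * ⟪x, y⟫_A))
        + ‖x‖ ^ 2 • (‖x‖ ^ 2 • ⟪y, y⟫_A - star ⟪x, y⟫_A * ⟪x, y⟫_A) := by
    simp only [inner_sub_left, inner_sub_right, inner_op_smul_left, inner_op_smul_right,
      inner_smul_left_real, inner_smul_right_real, ← star_inner x y, sub_mul, smul_mul_assoc,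
      smul_sub, mul_assoc]
    abel
  have hconj : star ⟪x, y⟫_A * ⟪x, x⟫_A * ⟪x, y⟫_A ≤ ‖x‖ ^ 2 • (star ⟪x, y⟫_A * ⟪x, y⟫_A) := by
    rw [norm_sq_eq_norm_inner_self A]
    exact CStarAlgebra.star_left_conjugate_le_norm_smul (star_inner x x)
  have hnonneg : 0 ≤ ‖x‖ ^ 2 • (‖x‖ ^ 2 • ⟪y, y⟫_A - star ⟪x, y⟫_A * ⟪x, y⟫_A) :=
    inner_self_nonneg.trans (hexpand ▸ add_le_of_nonpos_left (sub_nonpos.mpr hconj))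
  exact sub_nonneg.mp ((smul_nonneg_iff_nonneg_of_pos_left ht).mp hnonneg)

variable (A) in
lemma norm_inner_le (x y : N) : ‖⟪x, y⟫_A‖ ≤ ‖x‖ * ‖y‖ := by
  refine (pow_le_pow_iff_left₀ (norm_nonneg _) (by positivity) two_ne_zero).mp ?_
  calc ‖⟪x, y⟫_A‖ ^ 2 = ‖⟪y, x⟫_A * ⟪x, y⟫_A‖ := by
        rw [← star_inner x y, CStarRing.norm_star_mul_self, sq]
    _ ≤ ‖‖x‖ ^ 2 • ⟪y, y⟫_A‖ := by
        refine CStarAlgebra.norm_le_norm_of_nonneg_of_le ?_ (inner_mul_inner_swap_le x y)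
        rw [← star_inner x y]
        exact star_mul_self_nonneg _
    _ = (‖x‖ * ‖y‖) ^ 2 := by
        rw [norm_smul, Real.norm_of_nonneg (by positivity), ← norm_sq_eq_norm_inner_self]
        ring

variable (A) in
noncomputable def theta (x y : N) : N →L[ℂ] N :=
  ((opSMulₗ A y).comp (innerₗ A x)).mkContinuous (‖y‖ * ‖x‖) fun z => by
    calc ‖y <• ⟪x, z⟫_A‖ ≤ ‖y‖ * ‖⟪x, z⟫_A‖ := norm_op_smul_le y _
      _ ≤ ‖y‖ * (‖x‖ * ‖z‖) := by gcongr; exact norm_inner_le A x z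
      _ = ‖y‖ * ‖x‖ * ‖z‖ := by ring

@[simp] lemma theta_apply (x y z : N) : theta A x y z = y <• ⟪x, z⟫_A := rfl

lemma inner_theta_apply (x y w z : N) : ⟪w, theta A x y z⟫_A = ⟪theta A y x w, z⟫_A := by
  rw [theta_apply, theta_apply, inner_op_smul_right, inner_op_smul_left, star_inner]

lemma inner_sum_smul_theta_apply {ι : Type*} (s : Finset ι) (c : ι → ℂ) (x y : ι → N) (w z : N) :
    ⟪w, (∑ i ∈ s, c i • theta A (x i) (y i)) z⟫_A
      = ⟪(∑ i ∈ s, star (c i) • theta A (y i) (x i)) w, z⟫_A := by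
  simp only [sum_apply, smul_apply, inner_sum_left, inner_sum_right, inner_smul_left_complex,
    inner_smul_right_complex, star_star, inner_theta_apply]

lemma norm_apply_le_of_inner_apply_eq {T S : N → N} (hadj : ∀ w z, ⟪w, T z⟫_A = ⟪S w, z⟫_A)
    {C : ℝ} (hC : 0 ≤ C) {z : N} (hS : ‖S (T z)‖ ≤ C * ‖T z‖) : ‖T z‖ ≤ C * ‖z‖ := by
  rcases (norm_nonneg (T z)).eq_or_lt with hTz | hTz
  · rw [← hTz]
    positivity
  refine le_of_mul_le_mul_right ?_ hTz
  calc ‖T z‖ * ‖T z‖ = ‖⟪S (T z), z⟫_A‖ := by rw [← hadj, ← sq, norm_sq_eq_norm_inner_self A]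
    _ ≤ ‖S (T z)‖ * ‖z‖ := norm_inner_le A _ _
    _ ≤ C * ‖T z‖ * ‖z‖ := by gcongr
    _ = C * ‖z‖ * ‖T z‖ := by ring

lemma opNorm_comp_subtypeL_eq_of_inner_apply_eq (M : Submodule ℂ N) {T S : N →L[ℂ] N}
    (hadj : ∀ w z, ⟪w, T z⟫_A = ⟪S w, z⟫_A) (hT : ∀ z, T z ∈ M) (hS : ∀ z, S z ∈ M) :
    ‖T.comp M.subtypeL‖ = ‖T‖ := by
  have hadj' (w z : N) : ⟪w, S z⟫_A = ⟪T w, z⟫_A := by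
    rw [← star_inner, ← hadj, star_inner]
  refine le_antisymm ?_ ?_
  · calc ‖T.comp M.subtypeL‖ ≤ ‖T‖ * ‖M.subtypeL‖ := T.opNorm_comp_le _
      _ ≤ ‖T‖ := mul_le_of_le_one_right (norm_nonneg _) (Submodule.norm_subtypeL_le M)
  calc ‖T‖ ≤ ‖S.comp M.subtypeL‖ :=
        T.opNorm_le_bound (norm_nonneg (S.comp M.subtypeL)) fun z =>
          norm_apply_le_of_inner_apply_eq hadj (norm_nonneg _)
            ((S.comp M.subtypeL).le_opNorm ⟨T z, hT z⟩)
    _ ≤ ‖T.comp M.subtypeL‖ :=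
        (S.comp M.subtypeL).opNorm_le_bound (norm_nonneg (T.comp M.subtypeL)) fun m =>
          norm_apply_le_of_inner_apply_eq hadj' (norm_nonneg _)
            ((T.comp M.subtypeL).le_opNorm ⟨S m, hS m⟩)

lemma sSup_norm_apply_submodule_unitBall_eq (M : Submodule ℂ N) {T S : N →L[ℂ] N}
    (hadj : ∀ w z, ⟪w, T z⟫_A = ⟪S w, z⟫_A) (hT : ∀ z, T z ∈ M) (hS : ∀ z, S z ∈ M) :
    sSup ((fun z => ‖T z‖) '' {z : N | z ∈ M ∧ ‖z‖ ≤ 1})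
      = sSup ((fun z => ‖T z‖) '' {z : N | ‖z‖ ≤ 1}) := by
  have hM : {z : N | z ∈ M ∧ ‖z‖ ≤ 1} = Subtype.val '' Metric.closedBall (0 : M) 1 := by
    ext z
    simp [and_comm]
  have hN : {z : N | ‖z‖ ≤ 1} = Metric.closedBall 0 1 := by
    ext z
    simp
  rw [hM, hN, Set.image_image, T.sSup_unitClosedBall_eq_norm,
    ← opNorm_comp_subtypeL_eq_of_inner_apply_eq M hadj hT hS]
  exact (T.comp M.subtypeL).sSup_unitClosedBall_eq_norm

end RightCStarModule

open RightCStarModule in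
theorem finite_rank_operator_norm_eq_on_dense_submodule_general
    {A : Type u} [CStarAlgebra A] [PartialOrder A] [StarOrderedRing A]
    {N : Type*} [NormedAddCommGroup N] [NormedSpace ℂ N] [SMul Aᵐᵒᵖ N] [RightCStarModule A N]
    -- `M` is a closed `A`-submodule of `N`
    (M : Submodule ℂ N)
    (hMsmul : ∀ (a : A), ∀ m ∈ M, m <• a ∈ M) :
    -- the general finite-sum statement
    (∀ (k : ℕ) (x y : Fin k → N), (∀ i, x i ∈ M) → (∀ i, y i ∈ M) →
      ∀ lam : Fin k → ℂ,
      sSup ((fun z : N => ‖∑ i, lam i • ((y i) <• (inner (𝕜 := A) (x i) z))‖) ''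
          {z : N | z ∈ M ∧ ‖z‖ ≤ 1})
        = sSup ((fun z : N => ‖∑ i, lam i • ((y i) <• (inner (𝕜 := A) (x i) z))‖) ''
          {z : N | ‖z‖ ≤ 1})) ∧
    -- in particular, for the elementary operators `θ_{x,y}`
    (∀ x ∈ M, ∀ y ∈ M,
      sSup ((fun z : N => ‖y <• (inner (𝕜 := A) x z)‖) '' {z : N | z ∈ M ∧ ‖z‖ ≤ 1})
        = sSup ((fun z : N => ‖y <• (inner (𝕜 := A) x z)‖) '' {z : N | ‖z‖ ≤ 1})) := by
  have theta_mem {x y : N} (hy : y ∈ M) (z : N) : theta A x y z ∈ M := hMsmul _ _ hy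
  refine ⟨fun k x y hx hy lam => ?_, fun x hx y hy => ?_⟩
  · have hsum_mem {u v : Fin k → N} (hv : ∀ i, v i ∈ M) (c : Fin k → ℂ) (z : N) :
        (∑ i, c i • theta A (u i) (v i)) z ∈ M := by
      simpa only [sum_apply, smul_apply] using
        M.sum_mem fun i _ => M.smul_mem (c i) (theta_mem (hv i) z)
    simpa only [sum_apply, smul_apply, theta_apply] using
      sSup_norm_apply_submodule_unitBall_eq M (inner_sum_smul_theta_apply _ lam x y)
        (hsum_mem hy lam) (hsum_mem hx _)
  · exact sSup_norm_apply_submodule_unitBall_eq M (inner_theta_apply x y) (theta_mem hy)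
      (theta_mem hx)

/-- Let `A` be a von Neumann algebra, `N` a Hilbert `A`-module and `M` a closed
`A`-submodule with `M⊥ = {0}` in `N`.  For finite families `x i, y i ∈ M` and scalars
`λ i ∈ ℂ`, the operator `T(z) = Σ i, λ i • (y i) ⬝ ⟪x i, z⟫` has the same operator
norm on `M` as on `N`; in particular `‖θ_{x,y}‖` computed on `M` equals `‖θ_{x,y}‖`
computed on `N` for all `x, y ∈ M`. -/
theorem finite_rank_operator_norm_eq_on_dense_submodule
    {A : Type u} [CStarAlgebra A] [PartialOrder A] [StarOrderedRing A]
    (hA : IsVonNeumannAlgebra A)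
    {N : Type*} [NormedAddCommGroup N] [NormedSpace ℂ N] [SMul Aᵐᵒᵖ N] [RightCStarModule A N]
    [CompleteSpace N]
    -- `M` is a closed `A`-submodule of `N`
    (M : Submodule ℂ N) (hMclosed : IsClosed (M : Set N))
    (hMsmul : ∀ (a : A), ∀ m ∈ M, m <• a ∈ M)
    -- `M⊥ = {0}` in `N`
    (hMbot : ∀ n : N, (∀ m ∈ M, inner (𝕜 := A) m n = 0) → n = 0) :
    -- the general finite-sum statement
    (∀ (k : ℕ) (x y : Fin k → N), (∀ i, x i ∈ M) → (∀ i, y i ∈ M) →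
      ∀ lam : Fin k → ℂ,
      sSup ((fun z : N => ‖∑ i, lam i • ((y i) <• (inner (𝕜 := A) (x i) z))‖) ''
          {z : N | z ∈ M ∧ ‖z‖ ≤ 1})
        = sSup ((fun z : N => ‖∑ i, lam i • ((y i) <• (inner (𝕜 := A) (x i) z))‖) ''
          {z : N | ‖z‖ ≤ 1})) ∧
    -- in particular, for the elementary operators `θ_{x,y}`
    (∀ x ∈ M, ∀ y ∈ M,
      sSup ((fun z : N => ‖y <• (inner (𝕜 := A) x z)‖) '' {z : N | z ∈ M ∧ ‖z‖ ≤ 1})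
        = sSup ((fun z : N => ‖y <• (inner (𝕜 := A) x z)‖) '' {z : N | ‖z‖ ≤ 1})) :=
  finite_rank_operator_norm_eq_on_dense_submodule_general M hMsmul
end

section
/- Let A be a C*-algebra, let N be a Hilbert A-module and let M be a closed A-submodule of N with M⊥ = {0} in N. Suppose there exists a nonzero bounded A-linear functional r0 : N → A whose kernel contains M. Then there exists a bounded A-linear operator T0 : N → N such that: (a) T0 is not adjointable (there is no bounded A-linear S : N → N with ⟨T0 x, y⟩ = ⟨x, S y⟩ for all x, y ∈ N); (b) M ⊆ ker T0; and (c) ker T0 is not biorthogonally complemented, i.e. ker T0 ≠ (ker T0)⊥⊥. -/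
open scoped RightActions

/-- The orthogonal complement of a subset `S` of a Hilbert C*-module `N` with
`A`-valued inner product: all elements `x` with `⟪s, x⟫ = 0` for every `s ∈ S`. -/
def orthComplement (A : Type*) {N : Type*} [Zero A] [Inner A N] (S : Set N) : Set N :=
  {x : N | ∀ s ∈ S, inner (𝕜 := A) s x = 0}

section Aux

variable {A : Type*} [CStarAlgebra A] [PartialOrder A] [StarOrderedRing A]
    {N : Type*} [NormedAddCommGroup N] [NormedSpace ℂ N] [SMul Aᵐᵒᵖ N] [RightCStarModule A N]

@[simp] lemma RightCStarModule.inner_zero_right_s12 {x : N} : inner (𝕜 := A) x (0 : N) = 0 := by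
  have h := RightCStarModule.inner_add_right (A := A) (x := x) (y := (0 : N)) (z := 0)
  rw [add_zero] at h
  exact left_eq_add.mp h

lemma RightCStarModule.inner_neg_right {x y : N} :
    inner (𝕜 := A) x (-y) = -inner (𝕜 := A) x y := by
  have h := RightCStarModule.inner_add_right (A := A) (x := x) (y := y) (z := -y)
  rw [add_neg_cancel, RightCStarModule.inner_zero_right_s12] at h
  exact (neg_eq_of_add_eq_zero_right h.symm).symm

lemma RightCStarModule.inner_sub_right_s12 {x y z : N} :
    inner (𝕜 := A) x (y - z) = inner (𝕜 := A) x y - inner (𝕜 := A) x z := by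
  rw [sub_eq_add_neg, RightCStarModule.inner_add_right, RightCStarModule.inner_neg_right,
    ← sub_eq_add_neg]

@[simp] lemma RightCStarModule.inner_zero_left_s12 {y : N} : inner (𝕜 := A) (0 : N) y = 0 := by
  rw [← RightCStarModule.star_inner (A := A) y (0 : N), RightCStarModule.inner_zero_right_s12,
    star_zero]

@[simp] lemma RightCStarModule.inner_op_smul_left_s12 {a : A} {x y : N} :
    inner (𝕜 := A) (x <• a) y = star a * inner (𝕜 := A) x y := by
  rw [← RightCStarModule.star_inner (A := A) y (x <• a), RightCStarModule.inner_op_smul_right,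
    star_mul, RightCStarModule.star_inner]

lemma RightCStarModule.norm_sq_eq (x : N) : ‖x‖ ^ 2 = ‖inner (𝕜 := A) x x‖ := by
  rw [RightCStarModule.norm_eq_sqrt_norm_inner_self (A := A) x, Real.sq_sqrt (norm_nonneg _)]

attribute [simp] RightCStarModule.inner_op_smul_right

/-- Points of a Hilbert C*-module are separated by the inner product. -/
lemma cstar_ext {x y : N} (h : ∀ w : N, inner (𝕜 := A) w x = inner (𝕜 := A) w y) : x = y := by
  have h0 : inner (𝕜 := A) (x - y) (x - y) = 0 := by
    simp [RightCStarModule.inner_sub_right_s12, h (x - y)]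
  have := RightCStarModule.inner_self.mp h0
  exact sub_eq_zero.mp this

lemma aux_op_smul_add (z : N) (a b : A) : z <• (a + b) = z <• a + z <• b := by
  apply cstar_ext (A := A)
  intro w
  simp only [RightCStarModule.inner_op_smul_right, RightCStarModule.inner_add_right, mul_add]

lemma aux_op_smul_zero (z : N) : z <• (0 : A) = (0 : N) := by
  apply cstar_ext (A := A)
  intro w
  simp only [RightCStarModule.inner_op_smul_right, mul_zero, RightCStarModule.inner_zero_right_s12]

lemma aux_op_smul_mul (z : N) (a b : A) : z <• (a * b) = (z <• a) <• b := by
  apply cstar_ext (A := A)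
  intro w
  simp only [RightCStarModule.inner_op_smul_right, mul_assoc]

lemma aux_op_smul_sub (z : N) (a b : A) : z <• (a - b) = z <• a - z <• b := by
  apply cstar_ext (A := A)
  intro w
  simp only [RightCStarModule.inner_op_smul_right, RightCStarModule.inner_sub_right_s12, mul_sub]

lemma aux_norm_op_smul_le (z : N) (a : A) : ‖z <• a‖ ≤ ‖z‖ * ‖a‖ := by
  have h1 : ‖z <• a‖ ^ 2 = ‖star a * (inner (𝕜 := A) z z * a)‖ := by
    rw [RightCStarModule.norm_sq_eq (A := A)]
    congr 1
    simp [mul_assoc]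
  have h2 : ‖star a * (inner (𝕜 := A) z z * a)‖ ≤ ‖a‖ * (‖z‖ ^ 2 * ‖a‖) := by
    calc ‖star a * (inner (𝕜 := A) z z * a)‖ ≤ ‖star a‖ * ‖inner (𝕜 := A) z z * a‖ :=
          norm_mul_le _ _
      _ ≤ ‖star a‖ * (‖inner (𝕜 := A) z z‖ * ‖a‖) := by
          gcongr; exact norm_mul_le _ _
      _ = ‖a‖ * (‖z‖ ^ 2 * ‖a‖) := by rw [norm_star, RightCStarModule.norm_sq_eq (A := A)]
  have h3 : ‖z <• a‖ ^ 2 ≤ (‖z‖ * ‖a‖) ^ 2 := by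
    rw [h1]; calc ‖star a * (inner (𝕜 := A) z z * a)‖ ≤ ‖a‖ * (‖z‖ ^ 2 * ‖a‖) := h2
      _ = (‖z‖ * ‖a‖) ^ 2 := by ring
  have := Real.sqrt_le_sqrt h3
  rwa [Real.sqrt_sq (norm_nonneg _), Real.sqrt_sq (by positivity)] at this

lemma aux_continuous_op_smul (z : N) : Continuous (fun a : A => z <• a) := by
  rw [Metric.continuous_iff]
  intro b ε hε
  by_cases hz : z = 0
  · exact ⟨1, one_pos, fun a _ => by
      simpa [hz, dist_eq_norm, ← aux_op_smul_sub, show ∀ c : A, (0 : N) <• c = 0 from fun c =>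
        cstar_ext (A := A) (fun w => by simp)] using hε⟩
  · refine ⟨ε / ‖z‖, div_pos hε (norm_pos_iff.mpr hz), fun a hab => ?_⟩
    rw [dist_eq_norm, ← aux_op_smul_sub]
    calc ‖z <• (a - b)‖ ≤ ‖z‖ * ‖a - b‖ := aux_norm_op_smul_le z _
      _ < ‖z‖ * (ε / ‖z‖) := by
          gcongr
          · rwa [dist_eq_norm] at hab
      _ = ε := mul_div_cancel₀ ε (ne_of_gt (norm_pos_iff.mpr hz))

end Aux

/-- Let `A` be a C*-algebra, `N` a Hilbert `A`-module, `M` a closed `A`-submodule with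
`M⊥ = {0}` in `N`, and `r0 : N → A` a nonzero bounded `A`-linear functional vanishing
on `M`.  Then there is a bounded `A`-linear operator `T0 : N → N` which is not
adjointable, vanishes on `M`, and whose kernel is not biorthogonally complemented. -/
theorem exists_nonadjointable_operator_of_functional_vanishing_on_dense_submodule
    {A : Type*} [CStarAlgebra A] [PartialOrder A] [StarOrderedRing A]
    {N : Type*} [NormedAddCommGroup N] [NormedSpace ℂ N] [SMul Aᵐᵒᵖ N] [RightCStarModule A N]
    [CompleteSpace N]
    -- `M` is a closed `A`-submodule of `N`
    (M : Submodule ℂ N) (hMclosed : IsClosed (M : Set N))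
    (hMsmul : ∀ (a : A), ∀ m ∈ M, m <• a ∈ M)
    -- `M⊥ = {0}` in `N`
    (hMbot : ∀ n : N, (∀ m ∈ M, inner (𝕜 := A) m n = 0) → n = 0)
    -- `r0` is a nonzero bounded `A`-linear functional on `N` whose kernel contains `M`
    (r0 : N → A) (hr0cont : Continuous r0)
    (hr0add : ∀ x y : N, r0 (x + y) = r0 x + r0 y)
    (hr0mod : ∀ (x : N) (a : A), r0 (x <• a) = r0 x * a)
    (hr0ne : ∃ x : N, r0 x ≠ 0)
    (hr0M : ∀ m ∈ M, r0 m = 0) :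
    ∃ T0 : N → N,
      -- `T0` is a bounded `A`-linear operator on `N`
      Continuous T0 ∧ (∀ x y : N, T0 (x + y) = T0 x + T0 y) ∧
      (∀ (x : N) (a : A), T0 (x <• a) = T0 x <• a) ∧
      -- (a) `T0` is not adjointable
      (¬ ∃ S : N → N, Continuous S ∧ (∀ x y : N, S (x + y) = S x + S y) ∧
        (∀ (x : N) (a : A), S (x <• a) = S x <• a) ∧
        (∀ x y : N, inner (𝕜 := A) (T0 x) y = inner (𝕜 := A) x (S y))) ∧
      -- (b) `M ⊆ ker T0`
      (∀ m ∈ M, T0 m = 0) ∧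
      -- (c) `ker T0` is not biorthogonally complemented
      {x : N | T0 x = 0} ≠ orthComplement A (orthComplement A {x : N | T0 x = 0}) := by
  obtain ⟨x0, hx0⟩ := hr0ne
  set a : A := r0 x0 with ha
  -- `r0 0 = 0`
  have hr00 : r0 (0 : N) = 0 := by
    have h := hr0add 0 0
    rw [add_zero] at h
    exact (left_eq_add.mp h)
  set z : N := x0 <• (star a) with hz
  set T0 : N → N := fun x => z <• (r0 x) with hT0
  -- the key nondegeneracy: `T0 z ≠ 0`
  have hrz : r0 z = a * star a := by rw [hz, hr0mod]
  have hTzne : T0 z ≠ 0 := by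
    intro h
    have h1 : r0 (z <• (r0 z)) = 0 := by
      rw [show z <• (r0 z) = (0 : N) from h, hr00]
    rw [hr0mod, hrz] at h1
    -- `(a * star a) * (a * star a) = 0`
    have hsa : IsSelfAdjoint (a * star a) := by
      rw [IsSelfAdjoint, star_mul, star_star]
    have hnorm : ‖a * star a‖ ^ 2 = ‖(a * star a) * (a * star a)‖ := by
      have h2 := CStarRing.norm_self_mul_star (x := a * star a)
      rw [hsa.star_eq] at h2
      rw [sq]
      exact h2.symm
    rw [h1, norm_zero] at hnorm
    have : ‖a * star a‖ = 0 := by nlinarith [norm_nonneg (a * star a)]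
    have : a * star a = 0 := norm_eq_zero.mp this
    have : ‖a‖ = 0 := by
      have h2 := CStarRing.norm_self_mul_star (x := a)
      rw [this, norm_zero] at h2
      nlinarith [norm_nonneg a]
    exact hx0 (norm_eq_zero.mp this)
  refine ⟨T0, ?_, ?_, ?_, ?_, ?_, ?_⟩
  · exact (aux_continuous_op_smul z).comp hr0cont
  · intro x y
    rw [hT0]
    simp only
    rw [hr0add, aux_op_smul_add]
  · intro x b
    rw [hT0]
    simp only
    rw [hr0mod, aux_op_smul_mul]
  · -- not adjointable
    rintro ⟨S, -, -, -, hadj⟩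
    have hS0 : ∀ y : N, S y = 0 := by
      intro y
      apply hMbot
      intro m hm
      have hTm : T0 m = 0 := by
        rw [hT0]; simp only
        rw [hr0M m hm, aux_op_smul_zero]
      have := hadj m y
      rw [hTm] at this
      simpa using this.symm
    have : T0 z = 0 := by
      apply cstar_ext (A := A)
      intro w
      have h1 := hadj z w
      rw [hS0 w] at h1
      have h2 : inner (𝕜 := A) (T0 z) w = 0 := by simp [h1]
      calc inner (𝕜 := A) w (T0 z) = star (inner (𝕜 := A) (T0 z) w) :=
            (RightCStarModule.star_inner _ _).symm
        _ = 0 := by rw [h2, star_zero]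
        _ = inner (𝕜 := A) w (0 : N) := by simp
    exact hTzne this
  · intro m hm
    rw [hT0]; simp only
    rw [hr0M m hm, aux_op_smul_zero]
  · -- kernel not biorthogonally complemented
    intro heq
    -- first: the orthogonal complement of the kernel is `{0}`
    have hker : (M : Set N) ⊆ {x : N | T0 x = 0} := by
      intro m hm
      simp only [Set.mem_setOf_eq, hT0]
      rw [hr0M m hm, aux_op_smul_zero]
    have hOC : orthComplement A {x : N | T0 x = 0} ⊆ {(0 : N)} := by
      intro w hw
      have : w = 0 := hMbot w (fun m hm => hw m (hker hm))
      simp [this]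
    have hz_mem : z ∈ orthComplement A (orthComplement A {x : N | T0 x = 0}) := by
      intro s hs
      have : s = 0 := hOC hs
      simp [this]
    rw [← heq] at hz_mem
    exact hTzne hz_mem
end

section
/- Let A be a C*-algebra and let D ⊆ A be a modular maximal right ideal: D is a proper right ideal (closed under addition, scalar multiplication, and right multiplication by elements of A), maximal among proper right ideals, and there exists u ∈ A with a − u·a ∈ D for every a ∈ A. Regard A as a Hilbert A-module over itself with inner product ⟨a,b⟩ = a*·b, and let D⊥⊥ be the biorthogonal complement of D inside A. Then every bounded A-linear functional r : D⊥⊥ → A (continuous, additive, r(x·a) = r(x)·a) that vanishes on D vanishes on all of D⊥⊥; i.e. the zero functional on D has only the zero extension to D⊥⊥. -/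
/-- The orthogonal complement of a subset `S` of a C*-algebra `A` viewed as a Hilbert
`A`-module over itself with inner product `⟪a, b⟫ = a* ⬝ b`. -/
def rightOrth {A : Type*} [Mul A] [Star A] [Zero A] (S : Set A) : Set A :=
  {b | ∀ s ∈ S, star s * b = 0}

/-- Let `A` be a C*-algebra and `D ⊆ A` a modular maximal right ideal.  Regard `A` as a
Hilbert `A`-module over itself with `⟪a, b⟫ = a* ⬝ b`, and let `D⊥⊥` be the biorthogonal
complement of `D` in `A`.  Then every bounded `A`-linear functional `r : D⊥⊥ → A`
vanishing on `D` vanishes on all of `D⊥⊥`. -/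
theorem zero_extension_from_modular_maximal_right_ideal
    {A : Type*} [CStarAlgebra A]
    -- `D` is a right ideal of `A` (closed under addition, scalar multiplication and
    -- right multiplication by elements of `A`)
    (D : Submodule ℂ A) (hDright : ∀ x ∈ D, ∀ a : A, x * a ∈ D)
    -- `D` is proper
    (hDproper : D ≠ ⊤)
    -- `D` is maximal among proper right ideals
    (hDmax : ∀ E : Submodule ℂ A, (∀ x ∈ E, ∀ a : A, x * a ∈ E) → D < E → E = ⊤)
    -- `D` is modular
    (hDmod : ∃ u : A, ∀ a : A, a - u * a ∈ D)
    -- `r` is a bounded `A`-linear functional on `D⊥⊥`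
    (r : {x : A // x ∈ rightOrth (rightOrth (D : Set A))} → A)
    (hrcont : Continuous r)
    (hradd : ∀ x y z : {x : A // x ∈ rightOrth (rightOrth (D : Set A))},
      (x : A) + (y : A) = (z : A) → r x + r y = r z)
    (hrmod : ∀ (x z : {x : A // x ∈ rightOrth (rightOrth (D : Set A))}) (a : A),
      (x : A) * a = (z : A) → r x * a = r z)
    -- `r` vanishes on `D`
    (hrD : ∀ x : {x : A // x ∈ rightOrth (rightOrth (D : Set A))}, (x : A) ∈ D → r x = 0) :
    ∀ x : {x : A // x ∈ rightOrth (rightOrth (D : Set A))}, r x = 0 := by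
  classical
  have hDsub : ∀ d ∈ D, d ∈ rightOrth (rightOrth (D : Set A)) := by
    intro d hd s hs
    simpa using congrArg star (hs d hd)
  by_cases hcase : ∀ s ∈ rightOrth (D : Set A), s ∈ D
  · -- D⊥ ⊆ D, hence D⊥ = 0 and D⊥⊥ = A
    have hs0 : ∀ s ∈ rightOrth (D : Set A), s = 0 := by
      intro s hs
      exact (CStarRing.star_mul_self_eq_zero_iff s).mp (hs s (hcase s hs))
    have h1 : (1 : A) ∈ rightOrth (rightOrth (D : Set A)) := by
      intro s hs; rw [hs0 s hs]; simp
    intro x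
    have hx := hrmod ⟨1, h1⟩ x (x : A) (one_mul _)
    have hm : star (r ⟨1, h1⟩) ∈ rightOrth (D : Set A) := by
      intro d hd
      have h3 := hrmod ⟨1, h1⟩ ⟨d, hDsub d hd⟩ d (one_mul _)
      rw [hrD ⟨d, hDsub d hd⟩ hd] at h3
      simpa using congrArg star h3
    have hm0 : r ⟨1, h1⟩ = 0 := by
      have := hs0 _ hm
      simpa using congrArg star this
    rw [← hx, hm0, zero_mul]
  · push_neg at hcase
    obtain ⟨e0, he0, he0D⟩ := hcase
    let P : Submodule ℂ A :=
      { carrier := rightOrth (D : Set A)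
        add_mem' := by
          intro a b ha hb s hs
          rw [mul_add, ha s hs, hb s hs, add_zero]
        zero_mem' := by intro s hs; simp
        smul_mem' := by
          intro c a ha s hs
          rw [mul_smul_comm, ha s hs, smul_zero] }
    have hPright : ∀ z ∈ P, ∀ a : A, z * a ∈ P := by
      intro z hz a s hs
      rw [← mul_assoc, hz s hs, zero_mul]
    have hEright : ∀ z ∈ D ⊔ P, ∀ a : A, z * a ∈ D ⊔ P := by
      intro z hz a
      obtain ⟨d, hd, e, he, hde⟩ := Submodule.mem_sup.mp hz
      refine Submodule.mem_sup.mpr ⟨d * a, hDright d hd a, e * a, hPright e he a, ?_⟩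
      rw [← add_mul, hde]
    have hlt : D < D ⊔ P := left_lt_sup.mpr (fun h => he0D (h he0))
    have hE : D ⊔ P = ⊤ := hDmax _ hEright hlt
    intro x
    have h1 : (1 : A) ∈ D ⊔ P := hE ▸ Submodule.mem_top
    obtain ⟨d, hd, e, he, hde⟩ := Submodule.mem_sup.mp h1
    have hex : e * (x : A) = 0 := by
      have ht1 : e * (x : A) ∈ rightOrth (D : Set A) := by
        intro s hs
        rw [← mul_assoc, he s hs, zero_mul]
      have ht2 : e * (x : A) ∈ rightOrth (rightOrth (D : Set A)) := by
        intro s hs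
        have h4 : star s * (x : A) = 0 := x.2 s hs
        have h5 : star s * (d * (x : A)) = 0 := hDsub (d * (x : A)) (hDright d hd (x : A)) s hs
        have : e * (x : A) = (x : A) - d * (x : A) := by
          have : (d + e) * (x : A) = (x : A) := by rw [hde, one_mul]
          rw [add_mul] at this
          exact eq_sub_of_add_eq' this
        rw [this, mul_sub, h4, h5, sub_zero]
      exact (CStarRing.star_mul_self_eq_zero_iff _).mp (ht2 _ ht1)
    have hxD : (x : A) ∈ D := by
      have hxe : (x : A) = d * (x : A) := by
        have : (d + e) * (x : A) = (x : A) := by rw [hde, one_mul]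
        rw [add_mul, hex, add_zero] at this
        exact this.symm
      rw [hxe]
      exact hDright d hd (x : A)
    exact hrD x hxD
end

section
/- Let A be a commutative C*-algebra and let I ⊆ J be two norm-closed ideals of A, each of which is essential in A (i.e. has nonzero intersection with every nonzero norm-closed ideal of A). Regard I and J as Hilbert A-modules with inner product ⟨a,b⟩ = a*·b. Then every bounded A-linear functional r : J → A (continuous, additive, r(x·a) = r(x)·a for all x ∈ J, a ∈ A) that vanishes on I is identically zero on J. -/
/-!
The value `r x` annihilates `I`, because `r x * a = r (x * a)` and `x * a ∈ I` for `a ∈ I`.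
In a commutative C*-algebra the annihilator of an ideal is a closed ideal meeting it trivially
(`c * c = 0` forces `c = 0`), so essentiality of `I` makes the annihilator zero.
-/

theorem CStarRing.eq_zero_of_mul_self_eq_zero {A : Type*} [NonUnitalNormedCommRing A]
    [StarRing A] [CStarRing A] {c : A} (hc : c * c = 0) : c = 0 := by
  have hsq : (star c * c) * (star c * c) = 0 := by
    rw [mul_mul_mul_comm, hc, mul_zero]
  have hnorm : ‖star c * c‖ ^ 2 = 0 := by
    rw [← (IsSelfAdjoint.star_mul_self c).norm_mul_self, hsq, norm_zero]
  exact (star_mul_self_eq_zero_iff c).mp <|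
    norm_eq_zero.mp ((pow_eq_zero_iff two_ne_zero).mp hnorm)

namespace Ideal

theorem isClosed_annihilator {R : Type*} [CommSemiring R] [TopologicalSpace R] [ContinuousMul R]
    [T1Space R] (I : Ideal R) : IsClosed (I.annihilator : Set R) := by
  have hset : (I.annihilator : Set R) = ⋂ n ∈ I, (· * n) ⁻¹' {0} := by
    ext r
    simp [Submodule.mem_annihilator]
  rw [hset]
  exact isClosed_biInter fun n _ => isClosed_singleton.preimage (continuous_mul_const n)

variable {A : Type*} [NormedCommRing A] [StarRing A] [CStarRing A]

theorem annihilator_inf_self_eq_bot (I : Ideal A) : I.annihilator ⊓ I = ⊥ := by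
  refine eq_bot_iff.mpr fun c ⟨hcann, hcI⟩ => ?_
  exact CStarRing.eq_zero_of_mul_self_eq_zero (Submodule.mem_annihilator.mp hcann c hcI)

theorem annihilator_eq_bot_of_essential {I : Ideal A}
    (hI : ∀ L : Ideal A, IsClosed (L : Set A) → L ≠ ⊥ → I ⊓ L ≠ ⊥) :
    I.annihilator = ⊥ := by
  by_contra hne
  exact hI _ I.isClosed_annihilator hne (inf_comm I _ ▸ I.annihilator_inf_self_eq_bot)

end Ideal

theorem functional_on_essential_ideal_vanishing_on_smaller_ideal_eq_zero_general
    {A : Type*} [CommCStarAlgebra A]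
    (I J : Ideal A)
    -- `I` and `J` are essential ideals of `A`
    (hIess : ∀ L : Ideal A, IsClosed (L : Set A) → L ≠ ⊥ → I ⊓ L ≠ ⊥)
    -- `r` is a bounded `A`-linear functional on `J`
    (r : J → A)
    (hrmod : ∀ (x z : J) (a : A), (z : A) = (x : A) * a → r z = r x * a)
    -- `r` vanishes on `I`
    (hrI : ∀ x : J, (x : A) ∈ I → r x = 0) :
    ∀ x : J, r x = 0 := by
  intro x
  have hann : r x ∈ I.annihilator := Submodule.mem_annihilator.mpr fun a ha => by
    let xa : J := ⟨x * a, J.mul_mem_right a x.2⟩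
    rw [smul_eq_mul, ← hrmod x xa a rfl, hrI xa (I.mul_mem_left _ ha)]
  rwa [Ideal.annihilator_eq_bot_of_essential hIess, Submodule.mem_bot] at hann

/-- Let `A` be a commutative C*-algebra and `I ⊆ J` two norm-closed essential ideals of
`A`, regarded as Hilbert `A`-modules with `⟪a, b⟫ = a* ⬝ b`.  Then every bounded
`A`-linear functional `r : J → A` vanishing on `I` is identically zero on `J`. -/
theorem functional_on_essential_ideal_vanishing_on_smaller_ideal_eq_zero
    {A : Type*} [CommCStarAlgebra A]
    (I J : Ideal A)
    (hIclosed : IsClosed (I : Set A)) (hJclosed : IsClosed (J : Set A))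
    -- `I` and `J` are essential ideals of `A`
    (hIess : ∀ L : Ideal A, IsClosed (L : Set A) → L ≠ ⊥ → I ⊓ L ≠ ⊥)
    (hJess : ∀ L : Ideal A, IsClosed (L : Set A) → L ≠ ⊥ → J ⊓ L ≠ ⊥)
    -- `I ⊆ J`
    (hIJ : I ≤ J)
    -- `r` is a bounded `A`-linear functional on `J`
    (r : J → A) (hrcont : Continuous r)
    (hradd : ∀ x y : J, r (x + y) = r x + r y)
    (hrmod : ∀ (x z : J) (a : A), (z : A) = (x : A) * a → r z = r x * a)
    -- `r` vanishes on `I`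
    (hrI : ∀ x : J, (x : A) ∈ I → r x = 0) :
    ∀ x : J, r x = 0 :=
  functional_on_essential_ideal_vanishing_on_smaller_ideal_eq_zero_general I J hIess r hrmod hrI
end
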